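/- arXiv:2408.00134 — 8 statements merged into one kernel-verified Lean document; each statement's English description precedes it below -/
import Mathlib

section
/- Let p ≥ 1 and l ≥ 1 be natural numbers. For each i ∈ {1,…,p} let U_i : ℕ → ℝ be a kernel with U_i(0) = 0 and ∑_{n=0}^∞ |U_i(n) − U_i(n+1)| < ∞, and let G_i : ℝ^p → ℝ be continuous. Suppose x : ℕ → ℝ^p satisfies the generalized fractional map recurrence x_i(n) = x_i(0) − ∑_{k=0}^{n−1} G_i(x(k)) · U_i(n−k) for all n ≥ 1 and all i, and that for each m ∈ {1,…,l} the subsequence limits ξ_m = lim_{N→∞} x(Nl+m) exist in ℝ^p. Define S_{i,j+1,l} = ∑_{k=0}^∞ [U_i(lk+j) − U_i(lk+j+1)] for 0 ≤ j < l. Then for every i ∈ {1,…,p} and every m with 0 < m < l: ξ_{m+1,i} − ξ_{m,i} = ∑_{j=0}^{m−1} S_{i,j+1,l} · G_i(ξ_{m−j}) + ∑_{j=m}^{l−1} S_{i,j+1,l} · G_i(ξ_{m−j+l}). -/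
open Filter Finset Topology

/-!
Subtracting consecutive instances of the recurrence gives
`x(n+1) - x(n) = ∑_{j ≤ n} G(x(n-j)) (U(j) - U(j+1))`. Along `n = Nl + m` the factor
`G(x(Nl+m-j))` tends to `G` at the cycle point whose index is `m - j` modulo `l`, and `G ∘ x` is
bounded because it converges along every residue class, so by dominated convergence (the
differences of `U` are summable) the limit passes through the sum. Grouping the limit series by the
residue of `j` modulo `l` produces the coefficients `S`.
-/

theorem volterra_succ_sub_eq_sum {R : Type*} [CommRing R] {x g U : ℕ → R} {a : R} (hU0 : U 0 = 0)
    (hrec : ∀ n, x n = a - ∑ k ∈ range n, g k * U (n - k)) (n : ℕ) :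
    x (n + 1) - x n = ∑ j ∈ range (n + 1), g (n - j) * (U j - U (j + 1)) := by
  have hlast : ∑ k ∈ range n, g k * U (n - k) = ∑ k ∈ range (n + 1), g k * U (n - k) := by
    simp [sum_range_succ, hU0]
  rw [hrec, hrec, hlast, sub_sub_sub_cancel_left, ← sum_sub_distrib,
    ← sum_range_reflect _ (n + 1)]
  refine sum_congr rfl fun k hk => ?_
  have hk : k < n + 1 := mem_range.mp hk
  rw [show n + 1 - 1 - k = n - k by omega, show n + 1 - (n - k) = n - (n - k) + 1 by omega,
    Nat.sub_sub_self (by omega)]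
  ring

theorem isBounded_range_of_tendsto_mul_add {X : Type*} [PseudoMetricSpace X] {y η : ℕ → X}
    {l : ℕ} (hl : 0 < l)
    (hy : ∀ r, 1 ≤ r → r ≤ l → Tendsto (fun N => y (N * l + r)) atTop (𝓝 (η r))) :
    Bornology.IsBounded (Set.range y) := by
  have hcover : Set.range y ⊆ {y 0} ∪ ⋃ r ∈ Icc 1 l, Set.range fun N => y (N * l + r) := by
    rintro _ ⟨n, rfl⟩
    rcases n.eq_zero_or_pos with rfl | hn
    · exact Or.inl rfl
    refine Or.inr (Set.mem_biUnion (x := (n - 1) % l + 1) ?_ ⟨(n - 1) / l, ?_⟩)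
    · have hmod := Nat.mod_lt (n - 1) hl
      simp only [coe_Icc, Set.mem_Icc]
      omega
    · have hdiv := Nat.div_add_mod' (n - 1) l
      show y _ = y n
      rw [← add_assoc, hdiv]
      congr 1
      omega
  refine (Bornology.IsBounded.union Bornology.isBounded_singleton ?_).subset hcover
  exact (Bornology.isBounded_biUnion_finset _).2 fun r hr =>
    Metric.isBounded_range_of_tendsto _ (hy r (mem_Icc.1 hr).1 (mem_Icc.1 hr).2)

theorem tendsto_mul_add_sub {X : Type*} {y : ℕ → X} {F : Filter X} {l t s j q : ℕ}
    (h : Tendsto (fun N => y (N * l + t)) atTop F) (hq : t + j = s + q * l) :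
    Tendsto (fun N => y (N * l + s - j)) atTop F := by
  refine (h.comp (tendsto_sub_atTop_nat q)).congr' ?_
  filter_upwards [eventually_ge_atTop q] with N hN
  have hmul : (N - q) * l + q * l = N * l := by rw [← add_mul, Nat.sub_add_cancel hN]
  simp only [Function.comp_apply]
  congr 1
  omega

theorem tendsto_mul_add_sub_of_cycle {X : Type*} [TopologicalSpace X] {y η : ℕ → X} {l m : ℕ}
    (hl : 0 < l) (hm : m ≤ l)
    (hy : ∀ r, 1 ≤ r → r ≤ l → Tendsto (fun N => y (N * l + r)) atTop (𝓝 (η r))) (j : ℕ) :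
    Tendsto (fun N => y (N * l + m - j)) atTop
      (𝓝 (if j % l < m then η (m - j % l) else η (m + l - j % l))) := by
  have hj := Nat.div_add_mod' j l
  have hr := Nat.mod_lt j hl
  split_ifs with hjm
  · exact tendsto_mul_add_sub (hy (m - j % l) (by omega) (by omega)) (q := j / l) (by omega)
  · exact tendsto_mul_add_sub (hy (m + l - j % l) (by omega) (by omega)) (q := j / l + 1)
      (by rw [add_one_mul]; omega)

theorem tendsto_sum_range_mul_of_dominated {y : ℕ → ℕ → ℝ} {c d : ℕ → ℝ} {n : ℕ → ℕ} {C : ℝ}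
    (hn : Tendsto n atTop atTop) (hd : Summable d) (hy : ∀ N j, |y N j| ≤ C)
    (hlim : ∀ j, Tendsto (fun N => y N j) atTop (𝓝 (c j))) :
    Tendsto (fun N => ∑ j ∈ range (n N), y N j * d j) atTop (𝓝 (∑' j, c j * d j)) := by
  have htrunc : ∀ N, ∑ j ∈ range (n N), y N j * d j
      = ∑' j, (if j < n N then y N j * d j else 0) := fun N => by
    rw [tsum_eq_sum (s := range (n N)) fun j hj => if_neg (by simpa using hj)]
    exact sum_congr rfl fun j hj => (if_pos (mem_range.1 hj)).symm
  simp_rw [htrunc]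
  refine tendsto_tsum_of_dominated_convergence (hd.abs.mul_left C) (fun j => ?_)
    (Eventually.of_forall fun N j => ?_)
  · refine ((hlim j).mul_const (d j)).congr' ?_
    filter_upwards [hn.eventually_gt_atTop j] with N hN
    rw [if_pos hN]
  · split_ifs
    · rw [Real.norm_eq_abs, abs_mul]
      exact mul_le_mul_of_nonneg_right (hy N j) (abs_nonneg _)
    · simpa using mul_nonneg ((abs_nonneg _).trans (hy 0 0)) (abs_nonneg (d j))

theorem tsum_eq_sum_range_tsum_mul_add {E : Type*} [NormedAddCommGroup E] [CompleteSpace E]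
    {f : ℕ → E} (hf : Summable f) {l : ℕ} (hl : 0 < l) :
    ∑' j, f j = ∑ r ∈ range l, ∑' q, f (l * q + r) := by
  have : NeZero l := ⟨hl.ne'⟩
  let e : Fin l × ℕ ≃ ℕ := (Equiv.prodComm _ _).trans (Nat.divModEquiv l).symm
  have he : ∀ p : Fin l × ℕ, e p = l * p.2 + p.1 := fun p => by
    simp [e, Nat.divModEquiv_symm_apply, mul_comm]
  have hfe : Summable fun p => f (e p) := e.summable_iff.2 hf
  rw [← e.tsum_eq, hfe.tsum_prod' fun r => ?_, tsum_fintype, ← Fin.sum_univ_eq_sum_range]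
  · simp only [he]
  · exact hfe.comp_injective (Prod.mk_right_injective r)

theorem tsum_mod_mul_eq_sum_range {c d : ℕ → ℝ} (hd : Summable d) {l : ℕ} (hl : 0 < l) :
    ∑' j, c (j % l) * d j = ∑ r ∈ range l, c r * ∑' q, d (l * q + r) := by
  have hbound : ∀ j, ‖c (j % l) * d j‖ ≤ (∑ r ∈ range l, |c r|) * |d j| := fun j => by
    rw [Real.norm_eq_abs, abs_mul]
    refine mul_le_mul_of_nonneg_right ?_ (abs_nonneg _)
    exact single_le_sum (f := fun r => |c r|) (fun r _ => abs_nonneg _)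
      (mem_range.2 (Nat.mod_lt j hl))
  have hsum : Summable fun j => c (j % l) * d j :=
    (hd.abs.mul_left (∑ r ∈ range l, |c r|)).of_norm_bounded hbound
  rw [tsum_eq_sum_range_tsum_mul_add hsum hl]
  refine sum_congr rfl fun r hr => ?_
  simp only [Nat.mul_add_mod, Nat.mod_eq_of_lt (mem_range.1 hr)]
  exact tsum_mul_left

theorem generalized_fractional_map_cycle_differences_general
    (p l : ℕ) (hl : 1 ≤ l)
    (U : Fin p → ℕ → ℝ)
    (hU0 : ∀ i, U i 0 = 0)
    (hUdiff : ∀ i, Summable fun n => |U i n - U i (n + 1)|)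
    (G : Fin p → (Fin p → ℝ) → ℝ)
    (hG : ∀ i, Continuous (G i))
    (x : ℕ → Fin p → ℝ)
    (hrec : ∀ i, ∀ n, 1 ≤ n →
      x n i = x 0 i - ∑ k ∈ Finset.range n, G i (x k) * U i (n - k))
    (ξ : ℕ → Fin p → ℝ)
    (hξ : ∀ m, 1 ≤ m → m ≤ l →
      Tendsto (fun N => x (N * l + m)) atTop (nhds (ξ m))) :
    ∀ i, ∀ m, 0 < m → m < l →
      ξ (m + 1) i - ξ m i =
        (∑ j ∈ Finset.range m,
          (∑' k : ℕ, (U i (l * k + j) - U i (l * k + j + 1))) * G i (ξ (m - j)))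
        + ∑ j ∈ Finset.Ico m l,
          (∑' k : ℕ, (U i (l * k + j) - U i (l * k + j + 1))) * G i (ξ (m + l - j)) := by
  intro i m hm hml
  let c : ℕ → ℝ := fun r => G i (if r < m then ξ (m - r) else ξ (m + l - r))
  have hdiff := volterra_succ_sub_eq_sum (g := fun k => G i (x k)) (hU0 i) fun n =>
    n.eq_zero_or_pos.elim (fun hn => by simp [hn]) (hrec i n)
  obtain ⟨C, hC⟩ := isBounded_iff_forall_norm_le.1 <|
    isBounded_range_of_tendsto_mul_add (y := fun n => G i (x n)) (η := fun r => G i (ξ r)) hl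
      fun r h1 h2 => ((hG i).tendsto _).comp (hξ r h1 h2)
  have hn : Tendsto (fun N => N * l + m + 1) atTop atTop :=
    tendsto_atTop_mono (fun N => le_add_right (le_add_right (Nat.le_mul_of_pos_right N hl)))
      tendsto_id
  have hsum := tendsto_sum_range_mul_of_dominated (c := fun j => c (j % l)) hn (hUdiff i).of_abs
    (fun N j => hC _ ⟨N * l + m - j, rfl⟩)
    fun j => ((hG i).tendsto _).comp (tendsto_mul_add_sub_of_cycle hl hml.le hξ j)
  have hcycle : Tendsto (fun N => x (N * l + m + 1) i - x (N * l + m) i) atTop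
      (𝓝 (ξ (m + 1) i - ξ m i)) :=
    ((continuous_apply i).tendsto _ |>.comp (hξ (m + 1) m.succ_pos hml)).sub
      ((continuous_apply i).tendsto _ |>.comp (hξ m hm hml.le))
  rw [tendsto_nhds_unique hcycle (hsum.congr fun N => (hdiff _).symm),
    tsum_mod_mul_eq_sum_range (hUdiff i).of_abs hl, ← sum_range_add_sum_Ico _ hml.le]
  congr 1 <;> refine sum_congr rfl fun j hj => ?_
  · simp only [c, if_pos (mem_range.1 hj)]
    exact mul_comm _ _
  · simp only [c, if_neg (not_lt.2 (mem_Ico.1 hj).1)]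
    exact mul_comm _ _

/-- The difference equations satisfied by the points of an asymptotic `l`-cycle of a
generalized fractional `p`-dimensional map: for `0 < m < l` and each coordinate `i`,
`ξ_{m+1,i} − ξ_{m,i} = ∑_{j=0}^{m−1} S_{i,j+1,l} G_i(ξ_{m−j}) + ∑_{j=m}^{l−1} S_{i,j+1,l} G_i(ξ_{m−j+l})`,
where `S_{i,j+1,l} = ∑_{k=0}^∞ [U_i(lk+j) − U_i(lk+j+1)]`. -/
theorem generalized_fractional_map_cycle_differences
    (p l : ℕ) (hp : 1 ≤ p) (hl : 1 ≤ l)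
    (U : Fin p → ℕ → ℝ)
    (hU0 : ∀ i, U i 0 = 0)
    (hUdiff : ∀ i, Summable fun n => |U i n - U i (n + 1)|)
    (G : Fin p → (Fin p → ℝ) → ℝ)
    (hG : ∀ i, Continuous (G i))
    (x : ℕ → Fin p → ℝ)
    (hrec : ∀ i, ∀ n, 1 ≤ n →
      x n i = x 0 i - ∑ k ∈ Finset.range n, G i (x k) * U i (n - k))
    (ξ : ℕ → Fin p → ℝ)
    (hξ : ∀ m, 1 ≤ m → m ≤ l →
      Tendsto (fun N => x (N * l + m)) atTop (nhds (ξ m))) :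
    ∀ i, ∀ m, 0 < m → m < l →
      ξ (m + 1) i - ξ m i =
        (∑ j ∈ Finset.range m,
          (∑' k : ℕ, (U i (l * k + j) - U i (l * k + j + 1))) * G i (ξ (m - j)))
        + ∑ j ∈ Finset.Ico m l,
          (∑' k : ℕ, (U i (l * k + j) - U i (l * k + j + 1))) * G i (ξ (m + l - j)) :=
  generalized_fractional_map_cycle_differences_general p l hl U hU0 hUdiff G hG x hrec ξ hξ
end

section
/- Let p ≥ 1 and l ≥ 1 be natural numbers. For each i ∈ {1,…,p} let U_i : ℕ → ℝ be a kernel with U_i(0) = 0, U_i(n) ≥ 0 for all n, ∑_{n=0}^∞ |U_i(n) − U_i(n+1)| < ∞, and partial sums ∑_{n=1}^N U_i(n) → +∞ as N → ∞, and let G_i : ℝ^p → ℝ be continuous. Suppose x : ℕ → ℝ^p satisfies the generalized fractional map recurrence x_i(n) = x_i(0) − ∑_{k=0}^{n−1} G_i(x(k)) · U_i(n−k) for all n ≥ 1 and all i, and that for each m ∈ {1,…,l} the subsequence limits ξ_m = lim_{N→∞} x(Nl+m) exist in ℝ^p. Then for every i ∈ {1,…,p}: ∑_{j=1}^{l} G_i(ξ_j)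 = 0. -/
/-!
Fix a coordinate `i` and put `a k = G_i (x k)`. The recurrence says that the discrete convolution
`∑_{k<n} a k U_i (n - k)` equals `x_i 0 - x_i n`. Summing it over `l` consecutive indices replaces `a`
by its sums over windows of length `l`, up to an error bounded by `sup |U_i|` times finitely many
values of `a`; the window sums of `x_i` converge, so the convolution of the windowed `a` is bounded.
But every window meets each residue class mod `l` exactly once, so the window sums of `a` converge to
`S = ∑_j G_i (ξ_j)`. If `S > 0`, the convolution is eventually at least
`(S / 2) ∑_{j ≤ n} U_i j - const`, which diverges since `U_i ≥ 0` has divergent partial sums;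
`S < 0` is symmetric, hence `S = 0`.
-/

open Filter Finset Topology

def discreteConv (a U : ℕ → ℝ) (n : ℕ) : ℝ := ∑ k ∈ range n, a k * U (n - k)

def windowSum {α : Type*} [AddCommMonoid α] (l : ℕ) (f : ℕ → α) (k : ℕ) : α :=
  ∑ i ∈ range l, f (k + i)

theorem sum_range_apply_sub_eq_sum_Icc {M : Type*} [AddCommMonoid M] (U : ℕ → M) (n : ℕ) :
    ∑ k ∈ range n, U (n - k) = ∑ j ∈ Icc 1 n, U j := by
  induction n with
  | zero => simp
  | succ n ih =>
    rw [sum_range_succ', sum_Icc_succ_top (by omega), ← ih]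
    simp

theorem discreteConv_neg_left (a U : ℕ → ℝ) (n : ℕ) :
    discreteConv (fun k => -a k) U n = -discreteConv a U n := by
  simp [discreteConv, sum_neg_distrib]

theorem tendsto_discreteConv_atTop {a U : ℕ → ℝ} {L B : ℝ} (ha : Tendsto a atTop (𝓝 L))
    (hL : 0 < L) (hU : ∀ n, 0 ≤ U n) (hUB : ∀ n, U n ≤ B)
    (hV : Tendsto (fun N => ∑ n ∈ Icc 1 N, U n) atTop atTop) :
    Tendsto (discreteConv a U) atTop atTop := by
  obtain ⟨K, hK⟩ := eventually_atTop.1 (ha.eventually (eventually_ge_nhds (half_lt_self hL)))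
  set D := ∑ k ∈ range K, |a k - L / 2| * B
  have hlower : ∀ n ≥ K, L / 2 * ∑ j ∈ Icc 1 n, U j + -D ≤ discreteConv a U n := by
    intro n hn
    have hsplit : discreteConv a U n = L / 2 * ∑ j ∈ Icc 1 n, U j
        + (∑ k ∈ range K, (a k - L / 2) * U (n - k) + ∑ k ∈ Ico K n, (a k - L / 2) * U (n - k)) := by
      rw [sum_range_add_sum_Ico _ hn, ← sum_range_apply_sub_eq_sum_Icc, mul_sum, ← sum_add_distrib]
      exact sum_congr rfl fun k _ => by ring
    have hhead : -D ≤ ∑ k ∈ range K, (a k - L / 2) * U (n - k) := by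
      rw [← sum_neg_distrib]
      refine sum_le_sum fun k _ => ?_
      calc -(|a k - L / 2| * B) ≤ -(|a k - L / 2| * U (n - k)) :=
            neg_le_neg (mul_le_mul_of_nonneg_left (hUB _) (abs_nonneg _))
        _ = -|(a k - L / 2) * U (n - k)| := by rw [abs_mul, abs_of_nonneg (hU _)]
        _ ≤ _ := neg_abs_le _
    have htail : 0 ≤ ∑ k ∈ Ico K n, (a k - L / 2) * U (n - k) :=
      sum_nonneg fun k hk => mul_nonneg (sub_nonneg.2 (hK k (mem_Ico.1 hk).1)) (hU _)
    linarith
  exact tendsto_atTop_mono' _ (eventually_atTop.2 ⟨K, hlower⟩)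
    (tendsto_atTop_add_const_right _ _ (hV.const_mul_atTop (half_pos hL)))

theorem eq_zero_of_tendsto_of_abs_discreteConv_le {a U : ℕ → ℝ} {L B C : ℝ}
    (ha : Tendsto a atTop (𝓝 L)) (hU : ∀ n, 0 ≤ U n) (hUB : ∀ n, U n ≤ B)
    (hV : Tendsto (fun N => ∑ n ∈ Icc 1 N, U n) atTop atTop)
    (hC : ∀ n, |discreteConv a U n| ≤ C) : L = 0 := by
  have nonpos : ∀ {b : ℕ → ℝ} {L' : ℝ}, Tendsto b atTop (𝓝 L') →
      (∀ n, |discreteConv b U n| ≤ C) → L' ≤ 0 := by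
    intro b L' hb hbC
    by_contra! hL'
    obtain ⟨n, hn⟩ := ((tendsto_discreteConv_atTop hb hL' hU hUB hV).eventually_gt_atTop C).exists
    linarith [le_abs_self (discreteConv b U n), hbC n]
  refine le_antisymm (nonpos ha hC) (neg_nonpos.1 (nonpos ha.neg fun n => ?_))
  rw [discreteConv_neg_left, abs_neg]
  exact hC n

theorem sum_discreteConv_add (a U : ℕ → ℝ) (l n : ℕ) :
    ∑ i ∈ range l, discreteConv a U (n + i) = discreteConv (windowSum l a) U n
      + ∑ i ∈ range l, ∑ k ∈ range i, a k * U (n + i - k) := by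
  simp only [discreteConv, windowSum, sum_mul]
  rw [sum_comm, ← sum_add_distrib]
  refine sum_congr rfl fun i _ => ?_
  rw [add_comm n i, sum_range_add, add_comm]
  congr 1
  exact sum_congr rfl fun k _ => by rw [add_comm k i, Nat.add_sub_add_left]

theorem abs_discreteConv_windowSum_le {a U : ℕ → ℝ} {B C : ℝ} (hUB : ∀ n, |U n| ≤ B) (l : ℕ)
    (hC : ∀ n, |∑ i ∈ range l, discreteConv a U (n + i)| ≤ C) (n : ℕ) :
    |discreteConv (windowSum l a) U n| ≤ C + ∑ i ∈ range l, ∑ k ∈ range i, |a k| * B := by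
  set e := ∑ i ∈ range l, ∑ k ∈ range i, a k * U (n + i - k)
  have herr : |e| ≤ ∑ i ∈ range l, ∑ k ∈ range i, |a k| * B := by
    refine (abs_sum_le_sum_abs _ _).trans (sum_le_sum fun i _ => ?_)
    refine (abs_sum_le_sum_abs _ _).trans (sum_le_sum fun k _ => ?_)
    rw [abs_mul]
    exact mul_le_mul_of_nonneg_left (hUB _) (abs_nonneg _)
  have hCn := hC n
  rw [sum_discreteConv_add] at hCn
  calc |discreteConv (windowSum l a) U n| = |(discreteConv (windowSum l a) U n + e) - e| := by
        rw [add_sub_cancel_right]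
    _ ≤ |discreteConv (windowSum l a) U n + e| + |e| := abs_sub _ _
    _ ≤ _ := add_le_add hCn herr

theorem abs_le_tsum_abs_sub_succ {U : ℕ → ℝ} (hU0 : U 0 = 0)
    (hU : Summable fun n => |U n - U (n + 1)|) (n : ℕ) : |U n| ≤ ∑' t, |U t - U (t + 1)| := by
  have h := dist_le_range_sum_dist U n
  simp only [Real.dist_eq, hU0, zero_sub, abs_neg] at h
  exact h.trans (hU.sum_le_tsum _ fun t _ => abs_nonneg _)

theorem tendsto_of_forall_tendsto_mul_add {α : Type*} {F : Filter α} {f : ℕ → α} {l : ℕ}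
    (hl : 0 < l) (h : ∀ m < l, Tendsto (fun N => f (N * l + m)) atTop F) :
    Tendsto f atTop F := by
  intro s hs
  obtain ⟨N₀, hN₀⟩ := eventually_atTop.1 <|
    (eventually_all_finset (range l)).2 fun m hm => h m (mem_range.1 hm) hs
  refine mem_atTop_sets.2 ⟨N₀ * l, fun n hn => ?_⟩
  rw [← Nat.div_add_mod' n l]
  exact hN₀ _ ((Nat.le_div_iff_mul_le hl).2 hn) _ (mem_range.2 (Nat.mod_lt n hl))

theorem windowSum_add_one_of_periodic {α : Type*} [AddCommMonoid α] [IsRightCancelAdd α]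
    {P : ℕ → α} {l : ℕ} (hP : Function.Periodic P l) (k : ℕ) :
    windowSum l P (k + 1) = windowSum l P k := by
  have h := (sum_range_succ' (fun i => P (k + i)) l).symm.trans (sum_range_succ _ l)
  rw [add_zero, hP k] at h
  simpa only [windowSum, add_right_comm k 1, add_assoc] using add_right_cancel h

theorem tendsto_windowSum {α : Type*} [AddCommGroup α] [TopologicalSpace α]
    [IsTopologicalAddGroup α] {f y : ℕ → α} {l : ℕ} (hl : 0 < l)
    (h : ∀ m ∈ Icc 1 l, Tendsto (fun N => f (N * l + m)) atTop (𝓝 (y m))) :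
    Tendsto (windowSum l f) atTop (𝓝 (∑ m ∈ Icc 1 l, y m)) := by
  -- `P` is the `l`-periodic profile with `P m = y m` for `1 ≤ m ≤ l`: `f - P → 0`, and the window
  -- sums of `P` are constant.
  set P : ℕ → α := fun n => y ((n + l - 1) % l + 1)
  have hPper : Function.Periodic P l := fun n => by
    simp only [P, show n + l + l - 1 = n + l - 1 + l by omega, Nat.add_mod_right]
  have hPy : ∀ N, ∀ m < l, P (N * l + (m + 1)) = y (m + 1) := fun N m hm => by
    have hNl := hPper.nat_mul N (m + 1)
    rw [Nat.cast_id] at hNl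
    rw [add_comm, hNl]
    simp only [P, show m + 1 + l - 1 = m + l by omega, Nat.add_mod_right, Nat.mod_eq_of_lt hm]
  have hPsum : ∀ k, windowSum l P k = ∑ m ∈ Icc 1 l, y m := by
    intro k
    induction k with
    | zero =>
      rw [← windowSum_add_one_of_periodic hPper, windowSum, ← Ico_add_one_right_eq_Icc,
        sum_Ico_eq_sum_range, Nat.add_sub_cancel]
      exact sum_congr rfl fun m hm => by
        simpa [add_comm] using hPy 0 m (mem_range.1 hm)
    | succ k ih => rw [windowSum_add_one_of_periodic hPper, ih]
  have hfP : Tendsto (fun n => f n - P n) atTop (𝓝 0) := by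
    refine (tendsto_add_atTop_iff_nat 1).1 (tendsto_of_forall_tendsto_mul_add hl fun m hm => ?_)
    simp only [add_assoc, hPy _ m hm]
    simpa using (h (m + 1) (mem_Icc.2 ⟨by omega, hm⟩)).sub_const (y (m + 1))
  have hwin : Tendsto (windowSum l fun n => f n - P n) atTop (𝓝 0) := by
    have h0 := tendsto_finsetSum (range l) fun i _ => hfP.comp (tendsto_add_atTop_nat i)
    rw [sum_const_zero] at h0
    exact h0
  convert hwin.add_const (∑ m ∈ Icc 1 l, y m) using 1
  · ext k
    simp [← hPsum k, windowSum, sum_sub_distrib]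
  · rw [zero_add]

theorem generalized_fractional_map_cycle_closing_general
    (p l : ℕ) (hl : 1 ≤ l)
    (U : Fin p → ℕ → ℝ)
    (hU0 : ∀ i, U i 0 = 0)
    (hUpos : ∀ i n, 0 ≤ U i n)
    (hUdiff : ∀ i, Summable fun n => |U i n - U i (n + 1)|)
    (hUdiv : ∀ i, Tendsto (fun N => ∑ n ∈ Finset.Icc 1 N, U i n) atTop atTop)
    (G : Fin p → (Fin p → ℝ) → ℝ)
    (hG : ∀ i, Continuous (G i))
    (x : ℕ → Fin p → ℝ)
    (hrec : ∀ i, ∀ n, 1 ≤ n →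
      x n i = x 0 i - ∑ k ∈ Finset.range n, G i (x k) * U i (n - k))
    (ξ : ℕ → Fin p → ℝ)
    (hξ : ∀ m, 1 ≤ m → m ≤ l →
      Tendsto (fun N => x (N * l + m)) atTop (nhds (ξ m))) :
    ∀ i, ∑ j ∈ Finset.Icc 1 l, G i (ξ j) = 0 := by
  intro i
  set a : ℕ → ℝ := fun k => G i (x k)
  have hconv : ∀ n, discreteConv a (U i) n = x 0 i - x n i := by
    intro n
    rcases Nat.eq_zero_or_pos n with rfl | hn
    · simp [discreteConv]
    · rw [hrec i n hn, sub_sub_cancel]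
      rfl
  have hξm : ∀ m ∈ Icc 1 l, Tendsto (fun N => x (N * l + m)) atTop (𝓝 (ξ m)) :=
    fun m hm => hξ m (mem_Icc.1 hm).1 (mem_Icc.1 hm).2
  have ha : Tendsto (windowSum l a) atTop (𝓝 (∑ j ∈ Icc 1 l, G i (ξ j))) :=
    tendsto_windowSum hl fun m hm => ((hG i).tendsto _).comp (hξm m hm)
  have hx : Tendsto (windowSum l fun k => x k i) atTop (𝓝 (∑ j ∈ Icc 1 l, ξ j i)) :=
    tendsto_windowSum hl fun m hm => tendsto_pi_nhds.1 (hξm m hm) i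
  obtain ⟨C, hC⟩ := (hx.const_sub (l * x 0 i)).abs.bddAbove_range
  have hUB := abs_le_tsum_abs_sub_succ (hU0 i) (hUdiff i)
  refine eq_zero_of_tendsto_of_abs_discreteConv_le ha (hUpos i)
    (fun n => (le_abs_self _).trans (hUB n)) (hUdiv i) (abs_discreteConv_windowSum_le (C := C) hUB l ?_)
  intro n
  have hsum : ∑ j ∈ range l, discreteConv a (U i) (n + j)
      = l * x 0 i - windowSum l (fun k => x k i) n := by
    simp [hconv, windowSum, sum_sub_distrib]
  exact hsum ▸ hC ⟨n, rfl⟩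

/-- The closing system of equations for an asymptotic `l`-cycle of a generalized
fractional `p`-dimensional map with kernels in the class `𝔻⁰(ℕ₁)`:
`∑_{j=1}^{l} G_i(ξ_j) = 0` for every coordinate `i`. -/
theorem generalized_fractional_map_cycle_closing
    (p l : ℕ) (hp : 1 ≤ p) (hl : 1 ≤ l)
    (U : Fin p → ℕ → ℝ)
    (hU0 : ∀ i, U i 0 = 0)
    (hUpos : ∀ i n, 0 ≤ U i n)
    (hUdiff : ∀ i, Summable fun n => |U i n - U i (n + 1)|)
    (hUdiv : ∀ i, Tendsto (fun N => ∑ n ∈ Finset.Icc 1 N, U i n) atTop atTop)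
    (G : Fin p → (Fin p → ℝ) → ℝ)
    (hG : ∀ i, Continuous (G i))
    (x : ℕ → Fin p → ℝ)
    (hrec : ∀ i, ∀ n, 1 ≤ n →
      x n i = x 0 i - ∑ k ∈ Finset.range n, G i (x k) * U i (n - k))
    (ξ : ℕ → Fin p → ℝ)
    (hξ : ∀ m, 1 ≤ m → m ≤ l →
      Tendsto (fun N => x (N * l + m)) atTop (nhds (ξ m))) :
    ∀ i, ∑ j ∈ Finset.Icc 1 l, G i (ξ j) = 0 :=
  generalized_fractional_map_cycle_closing_general p l hl U hU0 hUpos hUdiff hUdiv G hG x hrec ξ hξ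
end

section
/- Let 0 < α < 1 and define the falling factorial kernel U_α : ℕ₁ → ℝ by U_α(n) = Γ(n+α−1)/Γ(n) (so that U_α(1) = Γ(α)). Then ∑_{k=0}^∞ [U_α(2k+1) − U_α(2k+2)] = Γ(α) · 2^{−α}; consequently, with the convention U_α(0) = 0, the period-2 coefficients satisfy S_{2,2} = ∑_{k=0}^∞ [U_α(2k+1) − U_α(2k+2)] = Γ(α) 2^{−α} and S_{1,2} = ∑_{k=0}^∞ [U_α(2k) − U_α(2k+1)] = −Γ(α) 2^{−α}. -/
/-!
Write `c m = Γ(m + α) / Γ(m + 1) = U_α(m + 1)`. Then `S_{2,2} = ∑ (c (2k) - c (2k+1))` is the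
alternating series `∑ (-1)^m c m` summed in pairs. Since `c m = Γ(α) * choose (α + m - 1) m` are
the coefficients of `Γ(α) (1 - x)^(-α)`, Abel's limit theorem evaluates it as `Γ(α) (1 + 1)^(-α)`;
the series converges because `c` decreases to `0`, the log-convexity of `Γ` giving
`c m ≤ m^(α - 1)`. Finally `S_{1,2} = -S_{2,2}` because the full telescoping sum
`∑ (U n - U (n + 1))` is `U 0 - lim U = 0`.
-/

open Filter Finset Real Topology

theorem Antitone.hasSum_sub_succ {f : ℕ → ℝ} (hf : Antitone f) {a : ℝ}
    (h : Tendsto f atTop (𝓝 a)) : HasSum (fun n => f n - f (n + 1)) (f 0 - a) := by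
  refine (hasSum_iff_tendsto_nat_of_nonneg (fun n => sub_nonneg.2 (hf n.le_succ)) _).2 ?_
  simp_rw [sum_range_sub']
  exact tendsto_const_nhds.sub h

theorem Antitone.hasSum_sub_of_tendsto_alternating {f : ℕ → ℝ} (hf : Antitone f) {l : ℝ}
    (h : Tendsto (fun n => ∑ i ∈ range n, (-1) ^ i * f i) atTop (𝓝 l)) :
    HasSum (fun k => f (2 * k) - f (2 * k + 1)) l := by
  refine (hasSum_iff_tendsto_nat_of_nonneg (fun k => sub_nonneg.2 (hf (2 * k).le_succ)) l).2 ?_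
  have hpair : ∀ n, ∑ k ∈ range n, (f (2 * k) - f (2 * k + 1)) =
      ∑ i ∈ range (2 * n), (-1) ^ i * f i := by
    intro n
    induction n with
    | zero => simp
    | succ n ih =>
      rw [sum_range_succ, ih, mul_add, mul_one, sum_range_succ, sum_range_succ, pow_succ, pow_mul]
      norm_num
      ring
  simp_rw [hpair]
  exact h.comp (strictMono_mul_left_of_pos two_pos).tendsto_atTop

theorem hasSum_even_sub_succ_of_odd {u : ℕ → ℝ} (hu : Antitone fun n => u (n + 1))
    (hlim : Tendsto u atTop (𝓝 (u 0))) {l : ℝ}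
    (hodd : HasSum (fun k => u (2 * k + 1) - u (2 * k + 2)) l) :
    HasSum (fun k => u (2 * k) - u (2 * k + 1)) (-l) := by
  have hlim' : Tendsto (fun n => u (n + 1)) atTop (𝓝 (u 0)) :=
    (tendsto_add_atTop_iff_nat 1).2 hlim
  have htel : HasSum (fun n => u n - u (n + 1)) 0 := by
    rw [← hasSum_nat_add_iff' 1, sum_range_one, zero_sub, neg_sub]
    exact Antitone.hasSum_sub_succ hu hlim'
  have heven : Summable fun k => u (2 * k) - u (2 * k + 1) :=
    htel.summable.comp_injective (mul_right_injective₀ two_ne_zero)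
  have hsplit := tsum_even_add_odd (f := fun n => u n - u (n + 1)) heven hodd.summable
  rw [htel.tsum_eq, hodd.tsum_eq] at hsplit
  rw [← eq_neg_of_add_eq_zero_left hsplit]
  exact heven.hasSum

theorem Real.Gamma_add_nat_eq_mul_ascPochhammer {s : ℝ} (hs : ∀ k : ℕ, s ≠ -k) (n : ℕ) :
    Gamma (s + n) = Gamma s * (ascPochhammer ℝ n).eval s := by
  induction n with
  | zero => simp
  | succ n ih =>
    have hsn : s + n ≠ 0 := fun h => hs n (by linarith)
    rw [ascPochhammer_succ_eval, Nat.cast_succ, ← add_assoc, Gamma_add_one hsn, ih]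
    ring

noncomputable def gammaRatio (α : ℝ) (m : ℕ) : ℝ := Gamma (m + α) / Gamma (m + 1)

section gammaRatio

variable {α : ℝ}

theorem gammaRatio_eq_Gamma_mul_choose (hα : 0 < α) (m : ℕ) :
    gammaRatio α m = Gamma α * Ring.choose (α + m - 1) m := by
  have hfact : (m.factorial : ℝ) * Ring.multichoose α m = (ascPochhammer ℝ m).eval α := by
    rw [← nsmul_eq_mul, Ring.factorial_nsmul_multichoose_eq_ascPochhammer,
      Polynomial.ascPochhammer_smeval_eq_eval]
  have hs : ∀ k : ℕ, α ≠ -k := fun k => ((neg_nonpos.2 k.cast_nonneg).trans_lt hα).ne'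
  rw [gammaRatio, ← Ring.multichoose_eq, add_comm, Gamma_add_nat_eq_mul_ascPochhammer hs,
    ← hfact, Gamma_nat_eq_factorial]
  field_simp

theorem gammaRatio_nonneg (hα : 0 < α) (m : ℕ) : 0 ≤ gammaRatio α m := by
  unfold gammaRatio
  positivity

theorem gammaRatio_succ (hα : 0 < α) (m : ℕ) :
    gammaRatio α (m + 1) = gammaRatio α m * ((m + α) / (m + 1)) := by
  simp only [gammaRatio, Nat.cast_succ, add_right_comm _ (1 : ℝ),
    Gamma_add_one (by positivity : (m : ℝ) + α ≠ 0),
    Gamma_add_one (by positivity : (m : ℝ) + 1 ≠ 0)]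
  field_simp

theorem gammaRatio_antitone (hα0 : 0 < α) (hα1 : α ≤ 1) : Antitone (gammaRatio α) := by
  refine antitone_nat_of_succ_le fun m => ?_
  rw [gammaRatio_succ hα0]
  exact mul_le_of_le_one_right (gammaRatio_nonneg hα0 m)
    ((div_le_one (by positivity)).2 (by linarith))

theorem gammaRatio_le_rpow (hα0 : 0 < α) (hα1 : α < 1) {m : ℕ} (hm : 0 < m) :
    gammaRatio α m ≤ (m : ℝ) ^ (α - 1) := by
  have hm' : (0 : ℝ) < m := by exact_mod_cast hm
  have hG : 0 < Gamma m := Gamma_pos_of_pos hm'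
  have hconv := Gamma_mul_add_mul_le_rpow_Gamma_mul_rpow_Gamma hm'
    (by positivity : (0 : ℝ) < m + 1) (by linarith : 0 < 1 - α) hα0 (by ring)
  rw [show (1 - α) * m + α * (m + 1) = m + α by ring, Gamma_add_one hm'.ne',
    mul_rpow hm'.le hG.le] at hconv
  rw [gammaRatio, Gamma_add_one hm'.ne', div_le_iff₀ (by positivity)]
  calc Gamma (m + α) ≤ Gamma m ^ (1 - α) * ((m : ℝ) ^ α * Gamma m ^ α) := hconv
    _ = (m : ℝ) ^ (α - 1) * (m * Gamma m) := by
      rw [rpow_sub_one hm'.ne', rpow_sub hG, rpow_one]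
      field_simp

theorem tendsto_gammaRatio_atTop (hα0 : 0 < α) (hα1 : α < 1) :
    Tendsto (gammaRatio α) atTop (𝓝 0) := by
  have hpow : Tendsto (fun m : ℕ => (m : ℝ) ^ (α - 1)) atTop (𝓝 0) := by
    have := (tendsto_rpow_neg_atTop (by linarith : 0 < 1 - α)).comp tendsto_natCast_atTop_atTop
    rwa [neg_sub] at this
  exact tendsto_of_tendsto_of_tendsto_of_le_of_le' tendsto_const_nhds hpow
    (Eventually.of_forall (gammaRatio_nonneg hα0))
    ((eventually_gt_atTop 0).mono fun m hm => gammaRatio_le_rpow hα0 hα1 hm)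

theorem hasSum_gammaRatio_mul_pow (hα : 0 < α) {x : ℝ} (hx : |x| < 1) :
    HasSum (fun m => gammaRatio α m * x ^ m) (Gamma α / (1 - x) ^ α) := by
  have h := (one_div_one_sub_rpow_hasFPowerSeriesOnBall_zero α).hasSum
    (y := x) (by simpa [Metric.eball_ofReal, edist_dist] using hx)
  simp only [FormalMultilinearSeries.ofScalars_apply_eq', smul_eq_mul, zero_add] at h
  have hcoeff : (fun m => gammaRatio α m * x ^ m) =
      fun m : ℕ => Gamma α * (Ring.choose (α + m - 1) m * x ^ m) := by
    ext m
    rw [gammaRatio_eq_Gamma_mul_choose hα, mul_assoc]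
  rw [hcoeff, div_eq_mul_one_div]
  exact h.mul_left _

theorem tendsto_sum_range_alternating_gammaRatio (hα0 : 0 < α) (hα1 : α < 1) :
    Tendsto (fun n => ∑ i ∈ range n, (-1) ^ i * gammaRatio α i) atTop
      (𝓝 (Gamma α * 2 ^ (-α))) := by
  obtain ⟨l, hl⟩ := (gammaRatio_antitone hα0 hα1.le).tendsto_alternating_series_of_tendsto_zero
    (tendsto_gammaRatio_atTop hα0 hα1)
  have hbinom : Tendsto (fun x => ∑' n, (-1) ^ n * gammaRatio α n * x ^ n) (𝓝[<] 1)
      (𝓝 (Gamma α * 2 ^ (-α))) := by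
    have hcont : ContinuousAt (fun x : ℝ => Gamma α / (1 + x) ^ α) 1 :=
      continuousAt_const.div ((continuousAt_const.add continuousAt_id).rpow_const
        (Or.inr hα0.le)) (by positivity)
    have hlim : Tendsto _ (𝓝[<] (1 : ℝ)) _ := hcont.tendsto.mono_left nhdsWithin_le_nhds
    rw [one_add_one_eq_two] at hlim
    rw [rpow_neg zero_le_two, ← div_eq_mul_inv]
    refine hlim.congr' ?_
    filter_upwards [Ioo_mem_nhdsLT (by norm_num : (-1 : ℝ) < 1)] with x hx
    have hx' : |-x| < 1 := by rwa [abs_neg, abs_lt]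
    rw [← sub_neg_eq_add, ← (hasSum_gammaRatio_mul_pow hα0 hx').tsum_eq]
    congr 1 with n
    rw [neg_pow]
    ring
  rwa [tendsto_nhds_unique (Real.tendsto_tsum_powerSeries_nhdsWithin_lt hl) hbinom] at hl

end gammaRatio

/-- For the falling factorial kernel `U_α(n) = Γ(n+α−1)/Γ(n)` (with `U_α(0) = 0`),
the period-2 weights are `S_{2,2} = ∑_{k=0}^∞ [U_α(2k+1) − U_α(2k+2)] = Γ(α) 2^{−α}`
and `S_{1,2} = ∑_{k=0}^∞ [U_α(2k) − U_α(2k+1)] = −Γ(α) 2^{−α}`. -/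
theorem fallingFactorial_period_two_weights
    (α : ℝ) (hα0 : 0 < α) (hα1 : α < 1)
    (U : ℕ → ℝ)
    (hU0 : U 0 = 0)
    (hU : ∀ n : ℕ, 1 ≤ n → U n = Real.Gamma (n + α - 1) / Real.Gamma n) :
    (∑' k : ℕ, (U (2 * k + 1) - U (2 * k + 2)) = Real.Gamma α * (2 : ℝ) ^ (-α)) ∧
    (∑' k : ℕ, (U (2 * k) - U (2 * k + 1)) = -(Real.Gamma α * (2 : ℝ) ^ (-α))) := by
  have hshift : (fun n => U (n + 1)) = gammaRatio α := by
    ext n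
    rw [hU (n + 1) n.succ_pos, gammaRatio]
    push_cast
    ring_nf
  have hodd : HasSum (fun k => U (2 * k + 1) - U (2 * k + 2)) (Gamma α * 2 ^ (-α)) := by
    have := (gammaRatio_antitone hα0 hα1.le).hasSum_sub_of_tendsto_alternating
      (tendsto_sum_range_alternating_gammaRatio hα0 hα1)
    rwa [← hshift] at this
  have hlim : Tendsto U atTop (𝓝 (U 0)) := by
    rw [hU0, ← tendsto_add_atTop_iff_nat 1, hshift]
    exact tendsto_gammaRatio_atTop hα0 hα1
  have hanti : Antitone fun n => U (n + 1) := hshift ▸ gammaRatio_antitone hα0 hα1.le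
  exact ⟨hodd.tsum_eq, (hasSum_even_sub_succ_of_odd hanti hlim hodd).tsum_eq⟩
end

section
/- Let a, b, h ∈ ℝ with h > 0, and let U₁, U₂ : ℕ → ℝ be kernels with U_i(0) = 0, U_i(n) ≥ 0 for all n, ∑_{n=0}^∞ |U_i(n) − U_i(n+1)| < ∞, and ∑_{n=1}^N U_i(n) → +∞ as N → ∞. Suppose (x₁(n), x₂(n)) satisfies the generalized fractional Hénon recurrence x₁(n) = x₁(0) − ∑_{k=0}^{n−1} G₁(x₁(k), x₂(k)) U₁(n−k) and x₂(n) = x₂(0) − ∑_{k=0}^{n−1} G₂(x₁(k), x₂(k)) U₂(n−k), where G₁(x,y) = −c₁(1 − x − a x² + y) and G₂(x,y) = −c₂(b x − y) for some constants c₁, c₂ > 0. If (x₁(n), x₂(n)) converges to a limit (x*, y*) as n → ∞, then 1 − x* − a (x*)² + y* = 0 and b x* − y* = 0; i.e., (x*, y*) is a fixed point of the classical Hénon map H_{a,b}(x,y) = (1 − a x² + y, b x). -/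
/-!
Write `gᵢ(k) = Gᵢ(x₁(k), x₂(k))`, so that `gᵢ(k) → Gᵢ(x*, y*)`. If this limit `L` were positive (by symmetry),
then `gᵢ(k) ≥ L/2` from some index `K` on, and the convolution `∑_{k<n} gᵢ(k) Uᵢ(n-k)` would be
at least a convergent head `∑_{k<K}` (the kernel converges, its differences being summable) plus
`L/2 · ∑_{j=1}^{n-K} Uᵢ(j) → ∞`. But the recurrence makes the convolution equal to
`xᵢ(0) − xᵢ(n)`, which converges. Hence `Gᵢ(x*, y*) = 0`, and `cᵢ > 0` gives the fixed-point
equations.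
-/

open Filter Finset Topology

theorem Real.tendsto_of_summable_abs_sub_succ {U : ℕ → ℝ}
    (hU : Summable fun n => |U n - U (n + 1)|) : ∃ l, Tendsto U atTop (𝓝 l) :=
  cauchySeq_tendsto_of_complete (cauchySeq_of_summable_dist hU)

theorem Finset.sum_Ico_sub_eq_sum_Icc {M : Type*} [AddCommMonoid M] (f : ℕ → M) {K n : ℕ}
    (hK : K ≤ n) : ∑ k ∈ Ico K n, f (n - k) = ∑ j ∈ Icc 1 (n - K), f j := by
  rw [sum_Ico_reflect f K (Nat.le_succ n), ← Ico_add_one_right_eq_Icc]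
  congr 2 <;> omega

section Convolution

variable {U : ℕ → ℝ} {g : ℕ → ℝ} {L : ℝ}

theorem tendsto_sum_range_mul_sub_atTop (hUpos : ∀ n, 0 ≤ U n) {l : ℝ}
    (hUlim : Tendsto U atTop (𝓝 l))
    (hUdiv : Tendsto (fun N => ∑ n ∈ Icc 1 N, U n) atTop atTop)
    (hL : 0 < L) (hg : Tendsto g atTop (𝓝 L)) :
    Tendsto (fun n => ∑ k ∈ range n, g k * U (n - k)) atTop atTop := by
  obtain ⟨K, hK⟩ := eventually_atTop.1 (hg.eventually (eventually_ge_nhds (half_lt_self hL)))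
  have head : Tendsto (fun n => ∑ k ∈ range K, g k * U (n - k)) atTop
      (𝓝 (∑ k ∈ range K, g k * l)) :=
    tendsto_finsetSum _ fun k _ => (hUlim.comp (tendsto_sub_atTop_nat k)).const_mul _
  have tail : Tendsto (fun n => L / 2 * ∑ j ∈ Icc 1 (n - K), U j) atTop atTop :=
    (hUdiv.comp (tendsto_sub_atTop_nat K)).const_mul_atTop (half_pos hL)
  refine tendsto_atTop_mono' _ ?_ (head.add_atTop tail)
  filter_upwards [eventually_ge_atTop K] with n hn
  have tail_le : L / 2 * ∑ j ∈ Icc 1 (n - K), U j ≤ ∑ k ∈ Ico K n, g k * U (n - k) := by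
    rw [← sum_Ico_sub_eq_sum_Icc U hn, mul_sum]
    exact sum_le_sum fun k hk => mul_le_mul_of_nonneg_right (hK k (mem_Ico.1 hk).1) (hUpos _)
  rw [← sum_range_add_sum_Ico _ hn]
  exact add_le_add_right tail_le _

theorem eq_zero_of_tendsto_sum_range_mul_sub (hUpos : ∀ n, 0 ≤ U n)
    (hUdiff : Summable fun n => |U n - U (n + 1)|)
    (hUdiv : Tendsto (fun N => ∑ n ∈ Icc 1 N, U n) atTop atTop)
    (hg : Tendsto g atTop (𝓝 L)) {s : ℝ}
    (hs : Tendsto (fun n => ∑ k ∈ range n, g k * U (n - k)) atTop (𝓝 s)) :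
    L = 0 := by
  obtain ⟨l, hUlim⟩ := Real.tendsto_of_summable_abs_sub_succ hUdiff
  rcases lt_trichotomy L 0 with hL | hL | hL
  · refine absurd (tendsto_sum_range_mul_sub_atTop hUpos hUlim hUdiv (neg_pos.2 hL) hg.neg)
      (not_tendsto_atTop_of_tendsto_nhds (a := -s) ?_)
    simpa only [neg_mul, sum_neg_distrib] using hs.neg
  · exact hL
  · exact absurd (tendsto_sum_range_mul_sub_atTop hUpos hUlim hUdiv hL hg)
      (not_tendsto_atTop_of_tendsto_nhds hs)

theorem eq_zero_of_volterra_recurrence_of_tendsto (hUpos : ∀ n, 0 ≤ U n)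
    (hUdiff : Summable fun n => |U n - U (n + 1)|)
    (hUdiv : Tendsto (fun N => ∑ n ∈ Icc 1 N, U n) atTop atTop)
    {x : ℕ → ℝ} (hrec : ∀ n, 1 ≤ n → x n = x 0 - ∑ k ∈ range n, g k * U (n - k))
    {xs : ℝ} (hx : Tendsto x atTop (𝓝 xs)) (hg : Tendsto g atTop (𝓝 L)) :
    L = 0 := by
  refine eq_zero_of_tendsto_sum_range_mul_sub hUpos hUdiff hUdiv hg (s := x 0 - xs) ?_
  refine (tendsto_const_nhds.sub hx).congr' ?_
  filter_upwards [eventually_ge_atTop 1] with n hn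
  rw [hrec n hn, sub_sub_cancel]

end Convolution

theorem generalized_fractional_henon_limit_is_fixed_point_general
    (a b : ℝ)
    (c₁ c₂ : ℝ) (hc₁ : 0 < c₁) (hc₂ : 0 < c₂)
    (U₁ U₂ : ℕ → ℝ)
    (hU₁pos : ∀ n, 0 ≤ U₁ n) (hU₂pos : ∀ n, 0 ≤ U₂ n)
    (hU₁diff : Summable fun n => |U₁ n - U₁ (n + 1)|)
    (hU₂diff : Summable fun n => |U₂ n - U₂ (n + 1)|)
    (hU₁div : Tendsto (fun N => ∑ n ∈ Finset.Icc 1 N, U₁ n) atTop atTop)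
    (hU₂div : Tendsto (fun N => ∑ n ∈ Finset.Icc 1 N, U₂ n) atTop atTop)
    (x₁ x₂ : ℕ → ℝ)
    (hrec₁ : ∀ n, 1 ≤ n → x₁ n = x₁ 0 -
      ∑ k ∈ Finset.range n, (-c₁ * (1 - x₁ k - a * (x₁ k) ^ 2 + x₂ k)) * U₁ (n - k))
    (hrec₂ : ∀ n, 1 ≤ n → x₂ n = x₂ 0 -
      ∑ k ∈ Finset.range n, (-c₂ * (b * x₁ k - x₂ k)) * U₂ (n - k))
    (xs ys : ℝ)
    (hlim : Tendsto (fun n => (x₁ n, x₂ n)) atTop (nhds (xs, ys))) :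
    1 - xs - a * xs ^ 2 + ys = 0 ∧ b * xs - ys = 0 := by
  have hx₁ : Tendsto x₁ atTop (𝓝 xs) := (continuous_fst.tendsto _).comp hlim
  have hx₂ : Tendsto x₂ atTop (𝓝 ys) := (continuous_snd.tendsto _).comp hlim
  have hG₁ := eq_zero_of_volterra_recurrence_of_tendsto hU₁pos hU₁diff hU₁div hrec₁ hx₁
    ((((tendsto_const_nhds.sub hx₁).sub ((hx₁.pow 2).const_mul a)).add hx₂).const_mul (-c₁))
  have hG₂ := eq_zero_of_volterra_recurrence_of_tendsto hU₂pos hU₂diff hU₂div hrec₂ hx₂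
    (((hx₁.const_mul b).sub hx₂).const_mul (-c₂))
  exact ⟨(mul_eq_zero.1 hG₁).resolve_left (neg_ne_zero.2 hc₁.ne'),
    (mul_eq_zero.1 hG₂).resolve_left (neg_ne_zero.2 hc₂.ne')⟩

/-- If a trajectory of the generalized fractional Hénon map converges, then its
limit is a fixed point of the classical Hénon map `H_{a,b}(x,y) = (1 − a x² + y, b x)`. -/
theorem generalized_fractional_henon_limit_is_fixed_point
    (a b h : ℝ) (hh : 0 < h)
    (c₁ c₂ : ℝ) (hc₁ : 0 < c₁) (hc₂ : 0 < c₂)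
    (U₁ U₂ : ℕ → ℝ)
    (hU₁0 : U₁ 0 = 0) (hU₂0 : U₂ 0 = 0)
    (hU₁pos : ∀ n, 0 ≤ U₁ n) (hU₂pos : ∀ n, 0 ≤ U₂ n)
    (hU₁diff : Summable fun n => |U₁ n - U₁ (n + 1)|)
    (hU₂diff : Summable fun n => |U₂ n - U₂ (n + 1)|)
    (hU₁div : Tendsto (fun N => ∑ n ∈ Finset.Icc 1 N, U₁ n) atTop atTop)
    (hU₂div : Tendsto (fun N => ∑ n ∈ Finset.Icc 1 N, U₂ n) atTop atTop)
    (x₁ x₂ : ℕ → ℝ)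
    (hrec₁ : ∀ n, 1 ≤ n → x₁ n = x₁ 0 -
      ∑ k ∈ Finset.range n, (-c₁ * (1 - x₁ k - a * (x₁ k) ^ 2 + x₂ k)) * U₁ (n - k))
    (hrec₂ : ∀ n, 1 ≤ n → x₂ n = x₂ 0 -
      ∑ k ∈ Finset.range n, (-c₂ * (b * x₁ k - x₂ k)) * U₂ (n - k))
    (xs ys : ℝ)
    (hlim : Tendsto (fun n => (x₁ n, x₂ n)) atTop (nhds (xs, ys))) :
    1 - xs - a * xs ^ 2 + ys = 0 ∧ b * xs - ys = 0 :=
  generalized_fractional_henon_limit_is_fixed_point_general a b c₁ c₂ hc₁ hc₂ U₁ U₂ hU₁pos hU₂pos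
    hU₁diff hU₂diff hU₁div hU₂div x₁ x₂ hrec₁ hrec₂ xs ys hlim
end

section
/- Let a, b, h, α ∈ ℝ with a ≠ 0, h > 0, C₀ := 1 − (2/h)^α ≠ 0, and set C₁ := (b − C₀²)/(a C₀), C₂ := (1/a)(2 + (b−1) C₁). Assume 2C₂ − C₁² ≥ 0. Define x₁ := (C₁ + √(2C₂ − C₁²))/2, x₂ := C₁ − x₁, y₁ := (b/2)C₁ + (b/C₀)(x₁ − C₁/2), and y₂ := b C₁ − y₁. Then these points satisfy the period-2 system of the fractional difference Hénon map: (i) x₂ − x₁ = (h/2)^α [ (x₂ − x₁)(1 + a(x₂ + x₁)) − (y₂ − y₁) ]; (ii) y₂ − y₁ = (h/2)^α [ (y₂ − y₁) − b (x₂ − x₁) ]; (iii) 2 − (x₂ + x₁) − a(x₂² + x₁²) + (y₂ + y₁) = 0; (iv) b(x₁ + x₂) − (y₁ + y₂) = 0. -/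
/-!
With `P = (h/2)^α = 1/(1 − C₀)`, the points satisfy `x₁ + x₂ = C₁`, `y₁ + y₂ = bC₁` and
`y₂ − y₁ = (b/C₀)(x₂ − x₁)`, so (iv) is immediate and (iii) reduces, via
`x₁² + x₂² = ((x₁ + x₂)² + (x₂ − x₁)²)/2 = C₂`, to the definition of `C₂`. Equations (i) and (ii)
are `x₂ − x₁` times `1 = P(1 + aC₁ − b/C₀)` and `b/C₀ = P b(1/C₀ − 1)`; the definition of `C₁`
gives `1 + aC₁ − b/C₀ = 1 − C₀`, and both follow from `P(1 − C₀) = 1`.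
-/

open Real

lemma inv_rpow_mul_rpow_self {z : ℝ} (hz : 0 < z) (α : ℝ) : z⁻¹ ^ α * z ^ α = 1 := by
  rw [inv_rpow hz.le, inv_mul_cancel₀ (rpow_pos_of_pos hz α).ne']

lemma sq_add_sq_of_eq_half_add_sqrt {S Q x₁ x₂ : ℝ} (hD : 0 ≤ 2 * Q - S ^ 2)
    (hx₁ : x₁ = (S + √(2 * Q - S ^ 2)) / 2) (hx₂ : x₂ = S - x₁) : x₂ ^ 2 + x₁ ^ 2 = Q := by
  subst hx₂ hx₁
  linear_combination sq_sqrt hD / 2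

/-- The explicit formulas for the period-2 points of the fractional difference
Hénon map satisfy the period-2 system (i)–(iv). -/
theorem fractional_henon_period_two_formulas
    (a b h α : ℝ) (ha : a ≠ 0) (hh : 0 < h)
    (C₀ C₁ C₂ : ℝ)
    (hC₀ : C₀ = 1 - (2 / h) ^ α) (hC₀ne : C₀ ≠ 0)
    (hC₁ : C₁ = (b - C₀ ^ 2) / (a * C₀))
    (hC₂ : C₂ = (1 / a) * (2 + (b - 1) * C₁))
    (hD : 0 ≤ 2 * C₂ - C₁ ^ 2)
    (x₁ x₂ y₁ y₂ : ℝ)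
    (hx₁ : x₁ = (C₁ + Real.sqrt (2 * C₂ - C₁ ^ 2)) / 2)
    (hx₂ : x₂ = C₁ - x₁)
    (hy₁ : y₁ = (b / 2) * C₁ + (b / C₀) * (x₁ - C₁ / 2))
    (hy₂ : y₂ = b * C₁ - y₁) :
    (x₂ - x₁ = (h / 2) ^ α * ((x₂ - x₁) * (1 + a * (x₂ + x₁)) - (y₂ - y₁))) ∧
    (y₂ - y₁ = (h / 2) ^ α * ((y₂ - y₁) - b * (x₂ - x₁))) ∧
    (2 - (x₂ + x₁) - a * (x₂ ^ 2 + x₁ ^ 2) + (y₂ + y₁) = 0) ∧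
    (b * (x₁ + x₂) - (y₁ + y₂) = 0) := by
  have hP : (1 - C₀) * (h / 2) ^ α = 1 := by
    rw [hC₀, sub_sub_cancel, ← inv_div]
    exact inv_rpow_mul_rpow_self (by positivity) α
  have haC₁ : 1 + a * C₁ - b / C₀ = 1 - C₀ := by
    rw [hC₁]; field_simp; ring
  have haC₂ : a * C₂ = 2 + (b - 1) * C₁ := by
    rw [hC₂]; field_simp
  have hsq : x₂ ^ 2 + x₁ ^ 2 = C₂ := sq_add_sq_of_eq_half_add_sqrt hD hx₁ hx₂
  have hxsum : x₂ + x₁ = C₁ := by rw [hx₂, sub_add_cancel]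
  have hysum : y₂ + y₁ = b * C₁ := by rw [hy₂, sub_add_cancel]
  have hydiff : y₂ - y₁ = b / C₀ * (x₂ - x₁) := by
    rw [hy₂, hy₁, hx₂]; ring
  refine ⟨?_, ?_, ?_, ?_⟩
  · rw [hydiff, hxsum]
    linear_combination (-(x₂ - x₁)) * hP - (h / 2) ^ α * (x₂ - x₁) * haC₁
  · rw [hydiff]
    linear_combination
      (-(b * (x₂ - x₁) / C₀)) * hP - b * (x₂ - x₁) * (h / 2) ^ α * mul_inv_cancel₀ hC₀ne
  · rw [hsq, hxsum, hysum]
    linear_combination -haC₂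
  · rw [add_comm x₁, add_comm y₁, hxsum, hysum, sub_self]
end

section
/- Let a, b, h, α ∈ ℝ with a ≠ 0, h > 0, and C₀ := 1 − (2/h)^α ≠ 0, and set C₁ := (b − C₀²)/(a C₀), C₂ := (1/a)(2 + (b−1) C₁). Suppose (x₁, y₁, x₂, y₂) ∈ ℝ⁴ with x₁ ≠ x₂ satisfies: (i) x₂ − x₁ = (h/2)^α [ (x₂ − x₁)(1 + a(x₂ + x₁)) − (y₂ − y₁) ]; (ii) y₂ − y₁ = (h/2)^α [ (y₂ − y₁) − b (x₂ − x₁) ]; (iii) 2 − (x₂ + x₁) − a(x₂² + x₁²) + (y₂ + y₁) = 0; (iv) b(x₁ + x₂) − (y₁ + y₂) = 0. Then x₁ + x₂ = C₁, x₁² + x₂² = C₂, y₂ − y₁ = (b/C₀)(x₂ − x₁), and 2C₂ − C₁² > 0 with {x₁, x₂} = {(C₁ + √(2C₂ − C₁²))/2, (C₁ − √(2C₂ − C₁²))/2}. -/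
open Real

/-! With `K = (h/2)^α` we have `C₀ = 1 - K⁻¹`, and an equation `u = K v` is the same as
`C₀ u = u - v`. So (ii) says `C₀ (y₂ - y₁) = b (x₂ - x₁)` and (i) says
`C₀ (x₂ - x₁) = (y₂ - y₁) - a (x₁ + x₂)(x₂ - x₁)`; eliminating `y₂ - y₁` and cancelling
`x₂ - x₁ ≠ 0` gives `a C₀ (x₁ + x₂) = b - C₀²`. Adding (iii) and (iv) gives the sum of squares,
and `2 C₂ - C₁² = (x₁ - x₂)²`, from which the pair is recovered. -/

lemma one_sub_inv_mul_of_eq_mul {F : Type*} [Field F] {K u v : F} (hK : K ≠ 0)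
    (h : u = K * v) : (1 - K⁻¹) * u = u - v := by
  rw [h]
  field_simp

lemma two_div_rpow_eq_inv {h : ℝ} (hh : 0 < h) (α : ℝ) : (2 / h) ^ α = ((h / 2) ^ α)⁻¹ := by
  rw [← inv_rpow (by positivity), inv_div]

lemma pair_eq_sum_add_sub_sqrt (x₁ x₂ : ℝ) :
    ({x₁, x₂} : Set ℝ) =
      {(x₁ + x₂ + √(2 * (x₁ ^ 2 + x₂ ^ 2) - (x₁ + x₂) ^ 2)) / 2,
       (x₁ + x₂ - √(2 * (x₁ ^ 2 + x₂ ^ 2) - (x₁ + x₂) ^ 2)) / 2} := by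
  rw [show 2 * (x₁ ^ 2 + x₂ ^ 2) - (x₁ + x₂) ^ 2 = (x₁ - x₂) ^ 2 by ring, sqrt_sq_eq_abs]
  rcases le_total x₁ x₂ with h | h
  · rw [abs_of_nonpos (sub_nonpos.2 h), Set.pair_comm]
    congr 2 <;> ring
  · rw [abs_of_nonneg (sub_nonneg.2 h)]
    congr 2 <;> ring

/-- Any solution of the period-2 system of the fractional difference Hénon map
with `x₁ ≠ x₂` is given by the explicit formulas: `x₁ + x₂ = C₁`,
`x₁² + x₂² = C₂`, `y₂ − y₁ = (b/C₀)(x₂ − x₁)`, the discriminant `2C₂ − C₁²` is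
positive, and `{x₁, x₂} = {(C₁ ± √(2C₂ − C₁²))/2}`. -/
theorem fractional_henon_period_two_solution
    (a b h α : ℝ) (ha : a ≠ 0) (hh : 0 < h)
    (C₀ C₁ C₂ : ℝ)
    (hC₀ : C₀ = 1 - (2 / h) ^ α) (hC₀ne : C₀ ≠ 0)
    (hC₁ : C₁ = (b - C₀ ^ 2) / (a * C₀))
    (hC₂ : C₂ = (1 / a) * (2 + (b - 1) * C₁))
    (x₁ x₂ y₁ y₂ : ℝ) (hne : x₁ ≠ x₂)
    (h1 : x₂ - x₁ = (h / 2) ^ α * ((x₂ - x₁) * (1 + a * (x₂ + x₁)) - (y₂ - y₁)))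
    (h2 : y₂ - y₁ = (h / 2) ^ α * ((y₂ - y₁) - b * (x₂ - x₁)))
    (h3 : 2 - (x₂ + x₁) - a * (x₂ ^ 2 + x₁ ^ 2) + (y₂ + y₁) = 0)
    (h4 : b * (x₁ + x₂) - (y₁ + y₂) = 0) :
    x₁ + x₂ = C₁ ∧
    x₁ ^ 2 + x₂ ^ 2 = C₂ ∧
    y₂ - y₁ = (b / C₀) * (x₂ - x₁) ∧
    0 < 2 * C₂ - C₁ ^ 2 ∧
    ({x₁, x₂} : Set ℝ) =
      {(C₁ + Real.sqrt (2 * C₂ - C₁ ^ 2)) / 2,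
       (C₁ - Real.sqrt (2 * C₂ - C₁ ^ 2)) / 2} := by
  have hK : (h / 2) ^ α ≠ 0 := (rpow_pos_of_pos (by positivity) α).ne'
  rw [two_div_rpow_eq_inv hh] at hC₀
  have hx := one_sub_inv_mul_of_eq_mul hK h1
  have hy := one_sub_inv_mul_of_eq_mul hK h2
  rw [← hC₀] at hx hy
  have hS : a * C₀ * (x₁ + x₂) = b - C₀ ^ 2 :=
    mul_left_cancel₀ (sub_ne_zero.2 hne.symm) (by linear_combination C₀ * hx + hy)
  have hsum : x₁ + x₂ = C₁ := by
    rw [hC₁, eq_div_iff (mul_ne_zero ha hC₀ne)]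
    linear_combination hS
  have hsq : x₁ ^ 2 + x₂ ^ 2 = C₂ := by
    rw [hC₂, ← hsum]
    field_simp
    linear_combination -h3 - h4
  have hdisc : 2 * C₂ - C₁ ^ 2 = (x₁ - x₂) ^ 2 := by
    rw [← hsum, ← hsq]
    ring
  refine ⟨hsum, hsq, ?_, hdisc ▸ sq_pos_of_ne_zero (sub_ne_zero.2 hne), ?_⟩
  · rw [div_mul_eq_mul_div, eq_div_iff hC₀ne]
    linear_combination hy
  · rw [← hsum, ← hsq]
    exact pair_eq_sum_add_sub_sqrt x₁ x₂
end

section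
/- Let b, h, α ∈ ℝ with h > 0, C₀ := 1 − (2/h)^α ≠ 0, and suppose a_bif := ((b − C₀²)/(4 C₀)) · ( b/C₀ − C₀ − 2(b − 1) ) ≠ 0. Define x* := (b − C₀²)/(2 a_bif C₀) and y* := b x*. Then (x*, y*) is a fixed point of the classical Hénon map with parameters a_bif, b; that is, 1 − a_bif (x*)² + y* = x* and b x* = y*. -/
/-! Writing `u = b − C₀²`, the fixed-point equation `a x² + (1 − b) x − 1 = 0` at `x = u / (2 a C₀)`
becomes, after clearing denominators, `u² − 2 C₀ (b − 1) u = 4 a C₀²`; and this is exactly the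
defining formula of `a_bif` multiplied by `4 C₀²`. -/

section Henon

variable {K : Type*} [Field K] [CharZero K]

theorem four_mul_bifurcationParam_mul_sq {a b C : K} (hC : C ≠ 0)
    (ha : a = ((b - C ^ 2) / (4 * C)) * (b / C - C - 2 * (b - 1))) :
    4 * a * C ^ 2 = (b - C ^ 2) ^ 2 - 2 * C * (b - 1) * (b - C ^ 2) := by
  rw [ha]
  field_simp

theorem henon_fixed_of_eq_div {a b C u x : K} (ha : a ≠ 0) (hC : C ≠ 0)
    (hu : 4 * a * C ^ 2 = u ^ 2 - 2 * C * (b - 1) * u) (hx : x = u / (2 * a * C)) :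
    1 - a * x ^ 2 + b * x = x := by
  subst hx
  field_simp
  linear_combination hu

end Henon

theorem fractional_henon_bifurcation_point_is_fixed_general
    (b : ℝ)
    (C₀ : ℝ) (hC₀ne : C₀ ≠ 0)
    (abif : ℝ)
    (habif : abif = ((b - C₀ ^ 2) / (4 * C₀)) * (b / C₀ - C₀ - 2 * (b - 1)))
    (habifne : abif ≠ 0)
    (xs ys : ℝ)
    (hxs : xs = (b - C₀ ^ 2) / (2 * abif * C₀))
    (hys : ys = b * xs) :
    1 - abif * xs ^ 2 + ys = xs ∧ b * xs = ys := by
  subst hys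
  exact ⟨henon_fixed_of_eq_div habifne hC₀ne (four_mul_bifurcationParam_mul_sq hC₀ne habif) hxs,
    rfl⟩

/-- At the bifurcation parameter value `a_bif`, the coincident period-2 point
`x* = (b − C₀²)/(2 a_bif C₀)`, `y* = b x*` is a fixed point of the classical
Hénon map with parameters `a_bif, b`. -/
theorem fractional_henon_bifurcation_point_is_fixed
    (b h α : ℝ) (hh : 0 < h)
    (C₀ : ℝ) (hC₀ : C₀ = 1 - (2 / h) ^ α) (hC₀ne : C₀ ≠ 0)
    (abif : ℝ)
    (habif : abif = ((b - C₀ ^ 2) / (4 * C₀)) * (b / C₀ - C₀ - 2 * (b - 1)))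
    (habifne : abif ≠ 0)
    (xs ys : ℝ)
    (hxs : xs = (b - C₀ ^ 2) / (2 * abif * C₀))
    (hys : ys = b * xs) :
    1 - abif * xs ^ 2 + ys = xs ∧ b * xs = ys :=
  fractional_henon_bifurcation_point_is_fixed_general b C₀ hC₀ne abif habif habifne xs ys hxs hys
end

section
/- Let 0 < α < 1 and define the falling factorial kernel U_α(n) = Γ(n+α−1)/Γ(n) for n ≥ 1. Then: (i) U_α(n) > 0 for all n ≥ 1 and the sequence (U_α(n)) is strictly decreasing with lim_{n→∞} U_α(n) = 0; (ii) the partial sums ∑_{n=1}^N U_α(n) tend to +∞ as N → ∞; (iii) ∑_{n=1}^∞ |U_α(n+1) − U_α(n)| < ∞. In particular, U_α belongs to the kernel class 𝔻⁰(ℕ₁). -/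
/-!
Put `v n = U (n + 1) = Γ(n + α) / Γ(n + 1)`. The functional equation of `Γ` gives
`(n + 1) v (n + 1) = (n + α) v n`, hence strict decrease, and summing it
telescopes to `α ∑_{k<N} v k = N v N`. So `v` is `α` times its own Cesàro means: its limit `L`
satisfies `L = α L`, i.e. `L = 0`; and `N v N ≥ α v 0`, so `v` dominates a harmonic series.
The differences of a bounded monotone sequence are absolutely summable by telescoping.
-/

open Filter Finset Real

theorem Real.mul_Gamma_add_one_add_div_Gamma_add_one {x a : ℝ} (hx : x ≠ 0)
    (hxa : x + a ≠ 0) :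
    x * (Gamma (x + 1 + a) / Gamma (x + 1)) = (x + a) * (Gamma (x + a) / Gamma x) := by
  rw [add_right_comm, Gamma_add_one hxa, Gamma_add_one hx, mul_div_mul_comm, ← mul_assoc,
    mul_div_cancel₀ _ hx]

theorem Antitone.summable_abs_sub_succ {v : ℕ → ℝ} (hanti : Antitone v)
    (hbdd : BddBelow (Set.range v)) : Summable fun n => |v (n + 1) - v n| := by
  obtain ⟨b, hb⟩ := hbdd
  have hstep (n : ℕ) : |v (n + 1) - v n| = v n - v (n + 1) := by
    rw [abs_sub_comm, abs_of_nonneg (sub_nonneg.mpr (hanti n.le_succ))]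
  simp_rw [hstep]
  refine summable_of_sum_range_le (c := v 0 - b) (fun n => sub_nonneg.mpr (hanti n.le_succ))
    fun N => ?_
  rw [sum_range_sub']
  linarith [hb (Set.mem_range_self N)]

def KernelRecurrence (α : ℝ) (v : ℕ → ℝ) : Prop :=
  ∀ n : ℕ, (n + 1 : ℝ) * v (n + 1) = (n + α) * v n

theorem kernelRecurrence_Gamma_div {α : ℝ} (hα : 0 < α) :
    KernelRecurrence α fun n => Gamma (n + α) / Gamma (n + 1) := fun n => by
  push_cast
  convert mul_Gamma_add_one_add_div_Gamma_add_one (x := n + 1) (a := α - 1)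
    (by positivity) (by linarith) using 2 <;> ring_nf

namespace KernelRecurrence

variable {α : ℝ} {v : ℕ → ℝ}

theorem strictAnti (h : KernelRecurrence α v) (hα : α < 1) (hpos : ∀ n, 0 < v n) :
    StrictAnti v := by
  refine strictAnti_nat_of_succ_lt fun n => ?_
  have hn : (0 : ℝ) < n + 1 := by positivity
  nlinarith [h n, hpos n]

theorem mul_sum_range (h : KernelRecurrence α v) (N : ℕ) :
    α * ∑ k ∈ range N, v k = N * v N := by
  induction N with
  | zero => simp
  | succ N ih =>
    rw [sum_range_succ, mul_add, ih, Nat.cast_succ, h]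
    ring

theorem tendsto_zero (h : KernelRecurrence α v) (hα : α ≠ 1) (hanti : Antitone v)
    (hbdd : BddBelow (Set.range v)) : Tendsto v atTop (nhds 0) := by
  obtain ⟨L, hL⟩ : ∃ L, Tendsto v atTop (nhds L) := ⟨_, tendsto_atTop_ciInf hanti hbdd⟩
  have hmean : Tendsto v atTop (nhds (α * L)) := by
    refine (hL.cesaro.const_mul α).congr' ?_
    filter_upwards [eventually_ge_atTop 1] with n hn
    rw [mul_left_comm, h.mul_sum_range, inv_mul_cancel_left₀ (by positivity)]
  have hL0 : (1 - α) * L = 0 := by linarith [tendsto_nhds_unique hL hmean]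
  rwa [(mul_eq_zero.mp hL0).resolve_left (sub_ne_zero.mpr hα.symm)] at hL

theorem not_summable (h : KernelRecurrence α v) (hα : 0 < α) (hpos : ∀ n, 0 < v n) :
    ¬ Summable v := by
  intro hv
  have hc : 0 < α * v 0 := mul_pos hα (hpos 0)
  have hlower : ∀ n ≥ 1, α * v 0 * (1 / n) ≤ v n := by
    intro n hn
    have hv0 : v 0 ≤ ∑ k ∈ range n, v k :=
      single_le_sum (fun k _ => (hpos k).le) (mem_range.mpr hn)
    rw [mul_one_div, div_le_iff₀ (Nat.cast_pos.mpr hn), mul_comm _ (n : ℝ), ← h.mul_sum_range]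
    exact mul_le_mul_of_nonneg_left hv0 hα.le
  have hharmonic : Summable fun n : ℕ => α * v 0 * (1 / n) := by
    refine hv.of_norm_bounded_eventually_nat ?_
    filter_upwards [eventually_ge_atTop 1] with n hn
    rw [Real.norm_of_nonneg (mul_nonneg hc.le (by positivity))]
    exact hlower n hn
  exact Real.not_summable_one_div_natCast ((summable_mul_left_iff hc.ne').mp hharmonic)

end KernelRecurrence

/-- The falling factorial kernel `U_α(n) = Γ(n+α−1)/Γ(n)`, `0 < α < 1`, is positive
and strictly decreasing with limit `0`, has divergent partial sums, and has
absolutely summable first differences; hence it belongs to the class `𝔻⁰(ℕ₁)`. -/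
theorem fallingFactorial_kernel_in_D0
    (α : ℝ) (hα0 : 0 < α) (hα1 : α < 1)
    (U : ℕ → ℝ)
    (hU : ∀ n : ℕ, 1 ≤ n → U n = Real.Gamma (n + α - 1) / Real.Gamma n) :
    (∀ n : ℕ, 1 ≤ n → 0 < U n) ∧
    (∀ n : ℕ, 1 ≤ n → U (n + 1) < U n) ∧
    Tendsto U atTop (nhds 0) ∧
    Tendsto (fun N => ∑ n ∈ Finset.Icc 1 N, U n) atTop atTop ∧
    Summable (fun n : ℕ => |U (n + 2) - U (n + 1)|) := by
  have hv : (fun n => U (n + 1)) = fun n : ℕ => Gamma (n + α) / Gamma (n + 1) := by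
    ext n
    rw [hU _ le_add_self]
    push_cast
    ring_nf
  have hrec : KernelRecurrence α fun n => U (n + 1) := hv ▸ kernelRecurrence_Gamma_div hα0
  have hpos (n : ℕ) : 0 < U (n + 1) := by
    rw [congrFun hv n]
    exact div_pos (Gamma_pos_of_pos (by positivity)) (Gamma_pos_of_pos (by positivity))
  have hstrict := hrec.strictAnti hα1 hpos
  have hbdd : BddBelow (Set.range fun n => U (n + 1)) :=
    ⟨0, Set.forall_mem_range.mpr fun n => (hpos n).le⟩
  have hsum (N : ℕ) : ∑ n ∈ Icc 1 N, U n = ∑ k ∈ range N, U (k + 1) := by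
    rw [range_eq_Ico, sum_Ico_add', zero_add, Ico_add_one_right_eq_Icc]
  refine ⟨fun n hn => ?_, fun n hn => ?_, ?_, ?_, hstrict.antitone.summable_abs_sub_succ hbdd⟩
  · obtain ⟨m, rfl⟩ := Nat.exists_eq_add_of_le' hn
    exact hpos m
  · obtain ⟨m, rfl⟩ := Nat.exists_eq_add_of_le' hn
    exact hstrict m.lt_succ_self
  · exact (tendsto_add_atTop_iff_nat 1).mp (hrec.tendsto_zero hα1.ne hstrict.antitone hbdd)
  · simpa only [hsum] using
      (not_summable_iff_tendsto_nat_atTop_of_nonneg fun n => (hpos n).le).mp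
        (hrec.not_summable hα0 hpos)
end
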